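/- arXiv:math/0611619 — 2 statements merged into one kernel-verified Lean document; each statement's English description precedes it below -/
import Mathlib

section
/- Let u : ℕ⁺ → ℕ⁺ be completely multiplicative. The sequence f_n(q) = [u(n)]_q of quantum integers satisfies the twisted functional equation f_{mn}(q) = f_m(q) · f_n(q^{u(m)}) for all positive integers m and n. -/
open Polynomial

/-- The quantum integer `[k]_q = 1 + q + ⋯ + q^{k-1}`. -/
noncomputable def qint (R : Type*) [CommRing R] (k : ℕ) : Polynomial R :=
  ∑ i ∈ Finset.range k, X ^ i

section

variable (R : Type*) [CommRing R]

lemma qint_succ (k : ℕ) : qint R (k + 1) = qint R k + X ^ k :=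
  Finset.sum_range_succ _ k

lemma qint_add (a b : ℕ) : qint R (a + b) = qint R a + X ^ a * qint R b := by
  simp only [qint, Finset.sum_range_add, pow_add, Finset.mul_sum]

lemma qint_mul (a b : ℕ) : qint R (a * b) = qint R a * (qint R b).comp (X ^ a) := by
  induction b with
  | zero => simp [qint]
  | succ b ih =>
    rw [Nat.mul_succ, qint_add, ih, qint_succ, add_comp, pow_comp, X_comp, ← pow_mul]
    ring

end

theorem quantum_twisted_solution_general (R : Type*) [CommRing R]
    (u : ℕ+ → ℕ+) (humul : ∀ m n : ℕ+, u (m * n) = u m * u n) :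
    ∀ m n : ℕ+,
      qint R (u (m * n)) = qint R (u m) * (qint R (u n)).comp (X ^ ((u m : ℕ))) := by
  intro m n
  rw [humul, PNat.mul_coe, qint_mul]

/-- For `u : ℕ⁺ → ℕ⁺` completely multiplicative, the sequence `f_n = [u(n)]_q` satisfies
the twisted functional equation `f_{mn}(q) = f_m(q) · f_n(q^{u(m)})`. -/
theorem quantum_twisted_solution (R : Type*) [CommRing R]
    (u : ℕ+ → ℕ+) (hu1 : u 1 = 1) (humul : ∀ m n : ℕ+, u (m * n) = u m * u n) :
    ∀ m n : ℕ+,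
      qint R (u (m * n)) = qint R (u m) * (qint R (u n)).comp (X ^ ((u m : ℕ))) :=
  quantum_twisted_solution_general R u humul
end

section
/- Let P be a set of primes and {h_p : p ∈ P} nonzero polynomials satisfying h_{p₁}(q)·α_{u(p₁)}(h_{p₂})(q) = h_{p₂}(q)·α_{u(p₂)}(h_{p₁})(q) for all p₁, p₂ ∈ P. Then there exists a unique sequence (f_n) of polynomials satisfying f_{mn}(q) = f_m(q)·α_{u(m)}(f_n)(q) for all m,n, with f_p = h_p for all p ∈ P and supp(F) = S(P). -/
open Polynomial

variable {A : Type*} [CommRing A] [IsDomain A]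

/-- A map `φ : A[q] → A[q]` belongs to `End*(A[q])`: it is multiplicative,
preserves `1`, sends `0` to `0`, and sends nonzero polynomials to nonzero polynomials. -/
def IsEndStar (φ : Polynomial A → Polynomial A) : Prop :=
  (∀ f g : Polynomial A, φ (f * g) = φ f * φ g) ∧ φ 1 = 1 ∧ φ 0 = 0 ∧
    ∀ f : Polynomial A, f ≠ 0 → φ f ≠ 0

/-- `α : ℕ⁺ → End*(A[q])` is a monoid homomorphism. -/
def IsEndStarHom (α : ℕ+ → Polynomial A → Polynomial A) : Prop :=
  (∀ n : ℕ+, IsEndStar (α n)) ∧ (∀ f : Polynomial A, α 1 f = f) ∧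
    ∀ m n : ℕ+, ∀ f : Polynomial A, α (m * n) f = α m (α n f)

/-!
The solution is forced to be the twisted product
`f_{p₁ ⋯ pₖ} = c_{p₁} · α_{u(p₁)}(c_{p₂} · α_{u(p₂)}(⋯ c_{pₖ}))` along the prime factors of `n`,
where `c` is `h` on `P` and `0` on the other primes. The compatibility condition is exactly
what makes this product invariant under swapping two adjacent primes, hence independent of
the order of the factors, and this gives the functional equation. Its support is read off
factor by factor since `A[q]` is a domain and each `α_k` preserves nonzeroness.
-/

namespace IsEndStarHom

variable {R : Type*} [CommRing R] {α : ℕ+ → R[X] → R[X]}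

theorem map_mul (hα : IsEndStarHom α) (k : ℕ+) (f g : R[X]) : α k (f * g) = α k f * α k g :=
  (hα.1 k).1 f g

theorem map_one (hα : IsEndStarHom α) (k : ℕ+) : α k 1 = 1 := (hα.1 k).2.1

theorem map_zero (hα : IsEndStarHom α) (k : ℕ+) : α k 0 = 0 := (hα.1 k).2.2.1

theorem map_ne_zero (hα : IsEndStarHom α) (k : ℕ+) {f : R[X]} (hf : f ≠ 0) : α k f ≠ 0 :=
  (hα.1 k).2.2.2 f hf

theorem one_apply (hα : IsEndStarHom α) (f : R[X]) : α 1 f = f := hα.2.1 f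

theorem mul_apply (hα : IsEndStarHom α) (m n : ℕ+) (f : R[X]) : α (m * n) f = α m (α n f) :=
  hα.2.2 m n f

theorem comp {u : ℕ+ → ℕ+} (hα : IsEndStarHom α) (hu1 : u 1 = 1)
    (humul : ∀ m n, u (m * n) = u m * u n) : IsEndStarHom (fun n => α (u n)) :=
  ⟨fun n => hα.1 (u n), by simpa [hu1] using hα.one_apply,
    fun m n f => by simp only [humul, hα.mul_apply]⟩

end IsEndStarHom

def PNat.primeFactorsList (n : ℕ+) : List ℕ+ := (n : ℕ).primeFactorsList.map Nat.toPNat'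

namespace PNat

theorem map_coe_primeFactorsList (n : ℕ+) :
    n.primeFactorsList.map ((↑) : ℕ+ → ℕ) = (n : ℕ).primeFactorsList := by
  rw [primeFactorsList, List.map_map]
  conv_rhs => rw [← List.map_id (n : ℕ).primeFactorsList]
  refine List.map_congr_left fun p hp => ?_
  simp [Nat.toPNat'_coe, Nat.pos_of_mem_primeFactorsList hp]

theorem prod_primeFactorsList (n : ℕ+) : n.primeFactorsList.prod = n := by
  apply PNat.coe_injective
  simpa [coe_coeMonoidHom, map_coe_primeFactorsList, Nat.prod_primeFactorsList n.ne_zero] using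
    map_list_prod coeMonoidHom n.primeFactorsList

theorem mem_primeFactorsList {n p : ℕ+} :
    p ∈ n.primeFactorsList ↔ (p : ℕ).Prime ∧ p ∣ n := by
  rw [PNat.dvd_iff, ← Nat.mem_primeFactorsList n.ne_zero, ← n.map_coe_primeFactorsList]
  exact (List.mem_map_of_injective PNat.coe_injective).symm

theorem primeFactorsList_prime {p : ℕ+} (hp : (p : ℕ).Prime) : p.primeFactorsList = [p] := by
  simp [primeFactorsList, Nat.primeFactorsList_prime hp, PNat.coe_toPNat']

theorem perm_primeFactorsList_mul (m n : ℕ+) :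
    (m * n).primeFactorsList.Perm (m.primeFactorsList ++ n.primeFactorsList) := by
  rw [primeFactorsList, PNat.mul_coe, primeFactorsList, primeFactorsList, ← List.map_append]
  exact (Nat.perm_primeFactorsList_mul m.ne_zero n.ne_zero).map _

end PNat

section TwistedProd

variable {M : Type*} [Monoid M] (α : ℕ+ → M → M) (c : ℕ+ → M)

def twistedProd : List ℕ+ → M
  | [] => 1
  | p :: l => c p * α p (twistedProd l)

@[simp] theorem twistedProd_nil : twistedProd α c [] = 1 := rfl

@[simp] theorem twistedProd_cons (p : ℕ+) (l : List ℕ+) :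
    twistedProd α c (p :: l) = c p * α p (twistedProd α c l) := rfl

variable {α c}

theorem twistedProd_congr {c' : ℕ+ → M} {l : List ℕ+} (h : ∀ p ∈ l, c p = c' p) :
    twistedProd α c l = twistedProd α c' l := by
  induction l with
  | nil => rfl
  | cons p l ih =>
    rw [List.forall_mem_cons] at h
    simp [h.1, ih h.2]

theorem eq_twistedProd_of_map_mul {g : ℕ+ → M} (hg1 : g 1 = 1)
    (hg : ∀ m n, g (m * n) = g m * α m (g n)) (l : List ℕ+) :
    g l.prod = twistedProd α g l := by
  induction l with
  | nil => exact hg1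
  | cons p l ih => rw [List.prod_cons, hg, ih, twistedProd_cons]

end TwistedProd

section EndStar

variable {R : Type*} [CommRing R] {α : ℕ+ → R[X] → R[X]} (hα : IsEndStarHom α) {c : ℕ+ → R[X]}
include hα

theorem twistedProd_append (l₁ l₂ : List ℕ+) :
    twistedProd α c (l₁ ++ l₂) = twistedProd α c l₁ * α l₁.prod (twistedProd α c l₂) := by
  induction l₁ with
  | nil => simp [hα.one_apply]
  | cons p l₁ ih => simp [ih, hα.map_mul, hα.mul_apply, mul_assoc]

theorem twistedProd_perm (hswap : ∀ p q, c p * α p (c q) = c q * α q (c p))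
    {l₁ l₂ : List ℕ+} (h : l₁.Perm l₂) : twistedProd α c l₁ = twistedProd α c l₂ := by
  induction h with
  | nil => rfl
  | cons p _ ih => simp [ih]
  | swap p q l =>
    simp only [twistedProd_cons, hα.map_mul, ← hα.mul_apply, mul_comm p q, ← mul_assoc, hswap]
  | trans _ _ ih₁ ih₂ => exact ih₁.trans ih₂

theorem indicator_mul_map_comm {P : Set ℕ+} {h : ℕ+ → R[X]}
    (hcompat : ∀ p ∈ P, ∀ q ∈ P, h p * α p (h q) = h q * α q (h p)) (p q : ℕ+) :
    P.indicator h p * α p (P.indicator h q) = P.indicator h q * α q (P.indicator h p) := by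
  by_cases hp : p ∈ P <;> by_cases hq : q ∈ P
  · simpa only [Set.indicator_of_mem hp, Set.indicator_of_mem hq] using hcompat p hp q hq
  all_goals simp [hp, hq, hα.map_zero]

theorem twistedProd_primeFactorsList_mul (hswap : ∀ p q, c p * α p (c q) = c q * α q (c p))
    (m n : ℕ+) :
    twistedProd α c (m * n).primeFactorsList
      = twistedProd α c m.primeFactorsList * α m (twistedProd α c n.primeFactorsList) := by
  rw [twistedProd_perm hα hswap (PNat.perm_primeFactorsList_mul m n), twistedProd_append hα,
    PNat.prod_primeFactorsList]

theorem twistedProd_primeFactorsList_prime {p : ℕ+} (hp : (p : ℕ).Prime) :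
    twistedProd α c p.primeFactorsList = c p := by
  simp [PNat.primeFactorsList_prime hp, hα.map_one]

variable [IsDomain R]

theorem twistedProd_ne_zero_iff (l : List ℕ+) :
    twistedProd α c l ≠ 0 ↔ ∀ p ∈ l, c p ≠ 0 := by
  induction l with
  | nil => simp
  | cons p l ih =>
    rw [twistedProd_cons, mul_ne_zero_iff, List.forall_mem_cons, ← ih]
    exact and_congr_right fun _ => ⟨fun h h0 => h (by rw [h0, hα.map_zero]), hα.map_ne_zero p⟩

theorem apply_one_eq_one_of_map_mul {g : ℕ+ → R[X]} (hg1 : g 1 ≠ 0)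
    (hg : ∀ m n, g (m * n) = g m * α m (g n)) : g 1 = 1 := by
  have h := hg 1 1
  rw [mul_one, hα.one_apply] at h
  exact (mul_left_cancel₀ hg1 (by rw [mul_one, ← h])).symm

theorem eq_twistedProd_primeFactorsList {g : ℕ+ → R[X]} (hg1 : g 1 ≠ 0)
    (hg : ∀ m n, g (m * n) = g m * α m (g n)) (hprime : ∀ p : ℕ+, (p : ℕ).Prime → g p = c p)
    (n : ℕ+) : g n = twistedProd α c n.primeFactorsList := by
  conv_lhs => rw [← n.prod_primeFactorsList]
  rw [eq_twistedProd_of_map_mul (apply_one_eq_one_of_map_mul hα hg1 hg) hg]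
  exact twistedProd_congr fun p hp => hprime p (PNat.mem_primeFactorsList.mp hp).1

end EndStar

/-- Given a set `P` of primes and nonzero polynomials `h_p` (`p ∈ P`) satisfying the
compatibility condition `h_{p₁} · α_{u(p₁)}(h_{p₂}) = h_{p₂} · α_{u(p₂)}(h_{p₁})`, there
is a unique sequence `(f_n)` satisfying `f_{mn} = f_m · α_{u(m)}(f_n)` with `f_p = h_p`
for all `p ∈ P` and support `S(P)`. -/
theorem exists_unique_solution_with_support
    (α : ℕ+ → Polynomial A → Polynomial A) (hα : IsEndStarHom α)
    (u : ℕ+ → ℕ+) (hu1 : u 1 = 1) (humul : ∀ m n : ℕ+, u (m * n) = u m * u n)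
    (P : Set ℕ+) (hP : ∀ p ∈ P, (p : ℕ).Prime)
    (h : ℕ+ → Polynomial A) (hne : ∀ p ∈ P, h p ≠ 0)
    (hcompat : ∀ p₁ ∈ P, ∀ p₂ ∈ P,
      h p₁ * α (u p₁) (h p₂) = h p₂ * α (u p₂) (h p₁)) :
    ∃! f : ℕ+ → Polynomial A,
      (∀ m n : ℕ+, f (m * n) = f m * α (u m) (f n)) ∧
      (∀ p ∈ P, f p = h p) ∧
      (∀ n : ℕ+, f n ≠ 0 ↔ ∀ p : ℕ+, (p : ℕ).Prime → p ∣ n → p ∈ P) := by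
  have hβ : IsEndStarHom fun n => α (u n) := hα.comp hu1 humul
  have hsupp : ∀ n, twistedProd (fun n => α (u n)) (P.indicator h) n.primeFactorsList ≠ 0 ↔
      ∀ p : ℕ+, (p : ℕ).Prime → p ∣ n → p ∈ P := fun n => by
    simp only [twistedProd_ne_zero_iff hβ, PNat.mem_primeFactorsList, Set.indicator_apply_ne_zero,
      Set.mem_inter_iff, Function.mem_support, and_imp]
    exact forall₂_congr fun p _ => imp_congr_right fun _ => ⟨And.left, fun hp => ⟨hp, hne p hp⟩⟩
  refine ⟨fun n => twistedProd (fun n => α (u n)) (P.indicator h) n.primeFactorsList,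
    ⟨twistedProd_primeFactorsList_mul hβ (indicator_mul_map_comm hβ hcompat), fun p hp => ?_,
      hsupp⟩, ?_⟩
  · exact (twistedProd_primeFactorsList_prime hβ (hP p hp)).trans (Set.indicator_of_mem hp h)
  rintro g ⟨hg, hgP, hgsupp⟩
  have hg1 : g 1 ≠ 0 := (hgsupp 1).mpr fun p hp hdvd => absurd hdvd (PNat.Prime.not_dvd_one hp)
  have hgprime : ∀ p : ℕ+, (p : ℕ).Prime → g p = P.indicator h p := by
    intro p hp
    by_cases hpP : p ∈ P
    · rw [hgP p hpP, Set.indicator_of_mem hpP]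
    · rw [Set.indicator_of_notMem hpP]
      exact not_not.mp fun hgp => hpP ((hgsupp p).mp hgp p hp dvd_rfl)
  exact funext (eq_twistedProd_primeFactorsList hβ hg1 hg hgprime)
end
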